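/- For every finite alphabet Σ, the function reverse : Σ* → Σ* that maps each word to its mirror image is computed by a planar reversible two-way finite transducer with 3 states. -/

import Mathlib

namespace Planar2DFT

/-- Tape alphabet: input letters plus the two endmarkers `▷` and `◁`. -/
inductive Tape (A : Type) where
  | lend : Tape A
  | rend : Tape A
  | sym  : A → Tape A

/-- Edges of the transition profile `G(ρ, f)` on vertices `Q × Bool`
(`true` codes direction `+1`, `false` codes `-1`): an edge
`(q, -ρ q) → (r, ρ r)` for every `(q, r) ∈ f`. -/
def ProfileEdge {Q : Type} (ρ : Q → Bool) (f : Set (Q × Q)) :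
    Q × Bool → Q × Bool → Prop :=
  fun u v => ∃ p ∈ f, u = (p.1, !ρ p.1) ∧ v = (p.2, ρ p.2)

/-- The extension of a strict order on `Q` to `Q × Bool`:
`(q,i) < (r,j)` iff (`i = -1` and `j = 1`), or (`q < r` and `i = j = 1`),
or (`q > r` and `i = j = -1`). -/
def ExtLt {Q : Type} (lt : Q → Q → Prop) : Q × Bool → Q × Bool → Prop :=
  fun x y =>
    (x.2 = false ∧ y.2 = true) ∨
    (lt x.1 y.1 ∧ x.2 = true ∧ y.2 = true) ∨
    (lt y.1 x.1 ∧ x.2 = false ∧ y.2 = false)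

/-- Planarity of a transition w.r.t. a direction map `ρ` and a strict total
order `lt`: no vertices `u < r < v < s` with an edge between `u` and `v`
(in either direction) and an edge between `r` and `s` (in either direction). -/
def IsPlanar {Q : Type} (ρ : Q → Bool) (lt : Q → Q → Prop) (f : Set (Q × Q)) : Prop :=
  ¬ ∃ u r v s : Q × Bool, ExtLt lt u r ∧ ExtLt lt r v ∧ ExtLt lt v s ∧
      (ProfileEdge ρ f u v ∨ ProfileEdge ρ f v u) ∧
      (ProfileEdge ρ f r s ∨ ProfileEdge ρ f s r)

/-- Deterministic transition: a partial function. -/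
def IsDet {Q : Type} (f : Set (Q × Q)) : Prop :=
  ∀ q r r', (q, r) ∈ f → (q, r') ∈ f → r = r'

/-- Reversible transition: a partial injection. -/
def IsRev {Q : Type} (f : Set (Q × Q)) : Prop :=
  IsDet f ∧ ∀ q q' r, (q, r) ∈ f → (q', r) ∈ f → q = q'

/-- Edges of the glued graph `C(ρ, f, g)` on `Q × Fin 3`, levels `0, 1, 2`
coding `-1, 0, 1`: the copy of `G(ρ,f)` lives on levels `{0,1}` (side `+1`
corresponding to level `1`) and the copy of `G(ρ,g)` on levels `{1,2}`
(side `+1` corresponding to level `2`). -/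
def GlueEdge {Q : Type} (ρ : Q → Bool) (f g : Set (Q × Q)) :
    Q × Fin 3 → Q × Fin 3 → Prop :=
  fun x y =>
    (x.2 ≠ 2 ∧ y.2 ≠ 2 ∧
      ProfileEdge ρ f (x.1, decide (x.2 = 1)) (y.1, decide (y.2 = 1))) ∨
    (x.2 ≠ 0 ∧ y.2 ≠ 0 ∧
      ProfileEdge ρ g (x.1, decide (x.2 = 2)) (y.1, decide (y.2 = 2)))

/-- Gluing composition `f * g` of transitions: `(q, r) ∈ f * g` iff there is a
directed path from `(q, -ρ q)` to `(r, ρ r)` in the glued graph `C(ρ, f, g)`. -/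
def glue {Q : Type} (ρ : Q → Bool) (f g : Set (Q × Q)) : Set (Q × Q) :=
  {p | Relation.ReflTransGen (GlueEdge ρ f g)
        (p.1, if ρ p.1 then (0 : Fin 3) else 2)
        (p.2, if ρ p.2 then (2 : Fin 3) else 0)}

/-- The identity transition, unit of the gluing composition. -/
def idRel (Q : Type) : Set (Q × Q) := {p | p.1 = p.2}

/-- Iterated gluing powers of a transition, with `glpow ρ f 0 = idRel Q`. -/
def glpow {Q : Type} (ρ : Q → Bool) (f : Set (Q × Q)) : ℕ → Set (Q × Q)
  | 0 => idRel Q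
  | n + 1 => glue ρ (glpow ρ f n) f

/-- A configuration of a two-way machine: the tape content to the left of the
head, the current state, and the tape content to the right of the head. -/
abbrev Config (Q A : Type) := List (Tape A) × Q × List (Tape A)

/-- The tape encoding `▷ u ◁` of an input word `u`. -/
def tapeOf {A : Type} (u : List A) : List (Tape A) :=
  Tape.lend :: (u.map Tape.sym ++ [Tape.rend])

/-- A two-way (nondeterministic) finite transducer. -/
structure TwoWayTransducer (Q A B : Type) where
  ρ : Q → Bool
  init : Q
  init_fwd : ρ init = true
  final : Set Q
  δ : Tape A → Set (Q × List B × Q)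

namespace TwoWayTransducer

variable {Q A B : Type}

/-- The transitions `⌊δ⌋(a)` of the underlying automaton. -/
def rel (T : TwoWayTransducer Q A B) (a : Tape A) : Set (Q × Q) :=
  {p | ∃ w, (p.1, w, p.2) ∈ T.δ a}

def Deterministic (T : TwoWayTransducer Q A B) : Prop :=
  ∀ a, IsDet (T.rel a)

def Reversible (T : TwoWayTransducer Q A B) : Prop :=
  ∀ a, IsRev (T.rel a)

def Planar (T : TwoWayTransducer Q A B) : Prop :=
  ∃ lt : Q → Q → Prop, IsStrictTotalOrder Q lt ∧
    ∀ a : A, IsPlanar T.ρ lt (T.rel (Tape.sym a))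

/-- One step of the two-way transducer, labelled by the output word. -/
def Step (T : TwoWayTransducer Q A B) (c : Config Q A) (w : List B)
    (c' : Config Q A) : Prop :=
  ∃ a u v q r, (q, w, r) ∈ T.δ a ∧
    ((T.ρ q = true ∧ T.ρ r = true ∧ c = (u, q, a :: v) ∧ c' = (u ++ [a], r, v)) ∨
     (T.ρ q = true ∧ T.ρ r = false ∧ c = (u, q, a :: v) ∧ c' = (u, r, a :: v)) ∨
     (T.ρ q = false ∧ T.ρ r = false ∧ c = (u ++ [a], q, v) ∧ c' = (u, r, a :: v)) ∨
     (T.ρ q = false ∧ T.ρ r = true ∧ c = (u ++ [a], q, v) ∧ c' = (u ++ [a], r, v)))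

/-- Multi-step runs, accumulating the concatenated output. -/
inductive Run (T : TwoWayTransducer Q A B) : Config Q A → List B → Config Q A → Prop
  | refl (c : Config Q A) : Run T c [] c
  | step {c₁ w₁ c₂ w₂ c₃} : Run T c₁ w₁ c₂ → T.Step c₂ w₂ c₃ → Run T c₁ (w₁ ++ w₂) c₃

/-- The pair `(u, v)` is realized by `T`. -/
def Realizes (T : TwoWayTransducer Q A B) (u : List A) (v : List B) : Prop :=
  ∃ qf ∈ T.final, T.Run ([], T.init, tapeOf u) v (tapeOf u, qf, [])

/-- `T` computes the partial function `f`. -/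
def Computes (T : TwoWayTransducer Q A B) (f : List A → Option (List B)) : Prop :=
  ∀ u v, f u = some v ↔ T.Realizes u v

end TwoWayTransducer

/-- Membership in the least submonoid of `B(Q,ρ)` containing the transitions
`⌊δ⌋(a)` for the input letters `a`. -/
inductive InBehav {Q A B : Type} (T : TwoWayTransducer Q A B) : Set (Q × Q) → Prop
  | one : InBehav T (idRel Q)
  | gen (a : A) : InBehav T (T.rel (Tape.sym a))
  | mul {f g} : InBehav T f → InBehav T g → InBehav T (glue T.ρ f g)

/-- The behaviour monoid `B(T)` is aperiodic. -/
def ApBehav {Q A B : Type} (T : TwoWayTransducer Q A B) : Prop :=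
  ∃ n : ℕ, ∀ f, InBehav T f → glpow T.ρ f (n + 1) = glpow T.ρ f n

/-- A first-order transduction: a partial function computed by some
deterministic two-way transducer whose behaviour monoid is aperiodic. -/
def IsFOTransduction {A B : Type} (f : List A → Option (List B)) : Prop :=
  ∃ (n : ℕ) (T : TwoWayTransducer (Fin n) A B),
    T.Deterministic ∧ ApBehav T ∧ T.Computes f

/-- A two-way (nondeterministic) finite automaton. -/
structure TwoWayAutomaton (Q A : Type) where
  ρ : Q → Bool
  init : Q
  init_fwd : ρ init = true
  final : Set Q
  δ : Tape A → Set (Q × Q)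

namespace TwoWayAutomaton

variable {Q A : Type}

def Deterministic (M : TwoWayAutomaton Q A) : Prop := ∀ a, IsDet (M.δ a)

def Reversible (M : TwoWayAutomaton Q A) : Prop := ∀ a, IsRev (M.δ a)

def Planar (M : TwoWayAutomaton Q A) : Prop :=
  ∃ lt : Q → Q → Prop, IsStrictTotalOrder Q lt ∧
    ∀ a : A, IsPlanar M.ρ lt (M.δ (Tape.sym a))

/-- One step of the two-way automaton. -/
def Step (M : TwoWayAutomaton Q A) (c c' : Config Q A) : Prop :=
  ∃ a u v q r, (q, r) ∈ M.δ a ∧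
    ((M.ρ q = true ∧ M.ρ r = true ∧ c = (u, q, a :: v) ∧ c' = (u ++ [a], r, v)) ∨
     (M.ρ q = true ∧ M.ρ r = false ∧ c = (u, q, a :: v) ∧ c' = (u, r, a :: v)) ∨
     (M.ρ q = false ∧ M.ρ r = false ∧ c = (u ++ [a], q, v) ∧ c' = (u, r, a :: v)) ∨
     (M.ρ q = false ∧ M.ρ r = true ∧ c = (u ++ [a], q, v) ∧ c' = (u ++ [a], r, v)))

def Accepts (M : TwoWayAutomaton Q A) (u : List A) : Prop :=
  ∃ qf ∈ M.final, Relation.ReflTransGen M.Step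
    ([], M.init, tapeOf u) (tapeOf u, qf, [])

def Language (M : TwoWayAutomaton Q A) : Set (List A) := {u | M.Accepts u}

end TwoWayAutomaton

/-- The underlying automaton `⌊T⌋` of a transducer `T`. -/
def forget {Q A B : Type} (T : TwoWayTransducer Q A B) : TwoWayAutomaton Q A :=
  { ρ := T.ρ, init := T.init, init_fwd := T.init_fwd, final := T.final,
    δ := fun a => T.rel a }

/-- Star-free languages: the smallest class containing all finite languages
and closed under finite union, complement and concatenation. -/
inductive StarFree {A : Type} : Set (List A) → Prop
  | of_finite (L : Set (List A)) : L.Finite → StarFree L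
  | union {L M : Set (List A)} : StarFree L → StarFree M → StarFree (L ∪ M)
  | compl {L : Set (List A)} : StarFree L → StarFree Lᶜ
  | concat {L M : Set (List A)} : StarFree L → StarFree M →
      StarFree {w | ∃ u ∈ L, ∃ v ∈ M, w = u ++ v}

/-- A (total, deterministic) sequential transducer. -/
structure SeqTransducer (Q A B : Type) where
  init : Q
  next : A → Q → Q
  out : A → Q → List B
  fin : Q → List B

namespace SeqTransducer

variable {Q A B : Type}

/-- Running a sequential transducer on a word from a state: final state and
produced output. -/
def run (T : SeqTransducer Q A B) : List A → Q → Q × List B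
  | [], q => (q, [])
  | a :: w, q =>
      let p := run T w (T.next a q)
      (p.1, T.out a q ++ p.2)

/-- The (total) sequential function computed by a sequential transducer. -/
def fn (T : SeqTransducer Q A B) (w : List A) : List B :=
  (T.run w T.init).2 ++ T.fin (T.run w T.init).1

end SeqTransducer

/-- Membership in the transition monoid of a sequential transducer, i.e. the
monoid of functions `Q → Q` generated by the `∂₁(a)`. -/
inductive SeqGen {Q A B : Type} (T : SeqTransducer Q A B) : (Q → Q) → Prop
  | id : SeqGen T id
  | gen (a : A) : SeqGen T (T.next a)
  | comp {h h'} : SeqGen T h → SeqGen T h' → SeqGen T (h ∘ h')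

/-- A sequential transducer is aperiodic when its transition monoid is. -/
def SeqTransducer.Aperiodic {Q A B : Type} (T : SeqTransducer Q A B) : Prop :=
  ∃ n : ℕ, ∀ h, SeqGen T h → h^[n + 1] = h^[n]

/-! The transducer has states `0, 1, 2`, with `1` the only backward one: state `0` runs right
to `◁`, turns into state `1`, which walks back to `▷` emitting every letter it crosses (this
produces the mirror image), and state `2` then runs right off the tape. On an input letter the
underlying transition is the identity relation; its transition profile consists of the nested
arcs `(q, -1) — (q, +1)`, so it is planar and reversible. Each table `δ a` is a partial function
and the final state is forward, so runs are deterministic and halt at the exit configuration: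
this accepting run is the only one, and the realized relation is exactly `reverse`. -/

namespace TwoWayTransducer

variable {Q A B : Type} {T : TwoWayTransducer Q A B}

def FunctionalTransitions (T : TwoWayTransducer Q A B) : Prop :=
  ∀ a q w₁ r₁ w₂ r₂, (q, w₁, r₁) ∈ T.δ a → (q, w₂, r₂) ∈ T.δ a → w₁ = w₂ ∧ r₁ = r₂

theorem FunctionalTransitions.deterministic (hT : T.FunctionalTransitions) :
    T.Deterministic :=
  fun a _ _ _ ⟨_, h₁⟩ ⟨_, h₂⟩ => (hT a _ _ _ _ _ h₁ h₂).2

theorem Step.fwd_fwd {a q w r} (u v : List (Tape A)) (h : (q, w, r) ∈ T.δ a)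
    (hq : T.ρ q = true) (hr : T.ρ r = true) : T.Step (u, q, a :: v) w (u ++ [a], r, v) :=
  ⟨a, u, v, q, r, h, Or.inl ⟨hq, hr, rfl, rfl⟩⟩

theorem Step.fwd_bwd {a q w r} (u v : List (Tape A)) (h : (q, w, r) ∈ T.δ a)
    (hq : T.ρ q = true) (hr : T.ρ r = false) : T.Step (u, q, a :: v) w (u, r, a :: v) :=
  ⟨a, u, v, q, r, h, Or.inr (Or.inl ⟨hq, hr, rfl, rfl⟩)⟩

theorem Step.bwd_bwd {a q w r} (u v : List (Tape A)) (h : (q, w, r) ∈ T.δ a)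
    (hq : T.ρ q = false) (hr : T.ρ r = false) : T.Step (u ++ [a], q, v) w (u, r, a :: v) :=
  ⟨a, u, v, q, r, h, Or.inr (Or.inr (Or.inl ⟨hq, hr, rfl, rfl⟩))⟩

theorem Step.bwd_fwd {a q w r} (u v : List (Tape A)) (h : (q, w, r) ∈ T.δ a)
    (hq : T.ρ q = false) (hr : T.ρ r = true) : T.Step (u ++ [a], q, v) w (u ++ [a], r, v) :=
  ⟨a, u, v, q, r, h, Or.inr (Or.inr (Or.inr ⟨hq, hr, rfl, rfl⟩))⟩

theorem Step.unique (hT : T.FunctionalTransitions) {c w₁ c₁ w₂ c₂}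
    (h₁ : T.Step c w₁ c₁) (h₂ : T.Step c w₂ c₂) : w₁ = w₂ ∧ c₁ = c₂ := by
  obtain ⟨a, u, v, q, r, hδ, h₁⟩ := h₁
  obtain ⟨a', u', v', q', r', hδ', h₂⟩ := h₂
  -- the direction of the state fixes the cell that is read, and `δ` of that cell the rest
  rcases h₁ with ⟨hq, hr, rfl, rfl⟩ | ⟨hq, hr, rfl, rfl⟩ | ⟨hq, hr, rfl, rfl⟩ |
    ⟨hq, hr, rfl, rfl⟩ <;>
  rcases h₂ with ⟨hq', hr', hc, rfl⟩ | ⟨hq', hr', hc, rfl⟩ | ⟨hq', hr', hc, rfl⟩ |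
    ⟨hq', hr', hc, rfl⟩ <;>
  simp only [Prod.mk.injEq, List.cons.injEq, List.append_singleton_inj] at hc <;>
  first
  | (simp_all; done)
  | obtain ⟨rfl, rfl, rfl, rfl⟩ := hc
  | obtain ⟨⟨rfl, rfl⟩, rfl, rfl⟩ := hc
  all_goals
    obtain ⟨rfl, rfl⟩ := hT _ _ _ _ _ _ hδ hδ'
    simp_all

theorem not_step_of_fwd_nil {l : List (Tape A)} {q w c'} (hq : T.ρ q = true) :
    ¬ T.Step (l, q, []) w c' := by
  rintro ⟨a, u, v, q', r, -, h⟩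
  rcases h with ⟨-, -, h, -⟩ | ⟨-, -, h, -⟩ | ⟨hq', -, h, -⟩ | ⟨hq', -, h, -⟩ <;>
    simp_all

theorem Step.run {c w c'} (h : T.Step c w c') : T.Run c w c' := by
  simpa using (Run.refl c).step h

theorem Run.trans {c w c' w' c''} (h : T.Run c w c') (h' : T.Run c' w' c'') :
    T.Run c (w ++ w') c'' := by
  induction h' with
  | refl => simpa using h
  | step _ hs ih => rw [← List.append_assoc]; exact ih.step hs

theorem Run.eq_or_step_run {c w c'} (h : T.Run c w c') :
    (c = c' ∧ w = []) ∨ ∃ w₁ c₁ w₂, T.Step c w₁ c₁ ∧ T.Run c₁ w₂ c' ∧ w = w₁ ++ w₂ := by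
  induction h with
  | refl => exact Or.inl ⟨rfl, rfl⟩
  | @step _ _ w₂ c₃ _ hs ih =>
    rcases ih with ⟨rfl, rfl⟩ | ⟨w₁, c₁, w₂', hs₁, hr, rfl⟩
    · exact Or.inr ⟨w₂, c₃, [], hs, Run.refl c₃, by simp⟩
    · exact Or.inr ⟨w₁, c₁, w₂' ++ w₂, hs₁, hr.step hs, by simp⟩

theorem Run.exists_suffix (hT : T.FunctionalTransitions) {c w cf w' c'}
    (hf : ∀ w'' c'', ¬ T.Step cf w'' c'') (h : T.Run c w cf) (h' : T.Run c w' c') :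
    ∃ w'', T.Run c' w'' cf ∧ w = w' ++ w'' := by
  induction h' with
  | refl => exact ⟨w, h, rfl⟩
  | step _ hs ih =>
    obtain ⟨w'', hw'', rfl⟩ := ih
    rcases hw''.eq_or_step_run with ⟨rfl, rfl⟩ | ⟨w₁, c₁, w₂, hs₁, hr, rfl⟩
    · exact absurd hs (hf _ _)
    · obtain ⟨rfl, rfl⟩ := hs₁.unique hT hs
      exact ⟨w₂, hr, by simp⟩

theorem Run.output_eq_of_halting (hT : T.FunctionalTransitions) {c w₁ c₁ w₂ c₂}
    (hf₁ : ∀ w c', ¬ T.Step c₁ w c') (hf₂ : ∀ w c', ¬ T.Step c₂ w c')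
    (h₁ : T.Run c w₁ c₁) (h₂ : T.Run c w₂ c₂) : w₁ = w₂ := by
  obtain ⟨w, hw, rfl⟩ := h₁.exists_suffix hT hf₁ h₂
  rcases hw.eq_or_step_run with ⟨-, rfl⟩ | ⟨_, _, _, hs, -, -⟩
  · simp
  · exact absurd hs (hf₂ _ _)

theorem Realizes.unique (hT : T.FunctionalTransitions) (hfin : ∀ q ∈ T.final, T.ρ q = true)
    {u v₁ v₂} (h₁ : T.Realizes u v₁) (h₂ : T.Realizes u v₂) : v₁ = v₂ := by
  obtain ⟨q₁, hq₁, h₁⟩ := h₁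
  obtain ⟨q₂, hq₂, h₂⟩ := h₂
  exact h₁.output_eq_of_halting hT (fun _ _ => not_step_of_fwd_nil (hfin q₁ hq₁))
    (fun _ _ => not_step_of_fwd_nil (hfin q₂ hq₂)) h₂

theorem computes_of_realizes (hT : T.FunctionalTransitions)
    (hfin : ∀ q ∈ T.final, T.ρ q = true) {f : List A → List B}
    (hf : ∀ u, T.Realizes u (f u)) : T.Computes (fun u => some (f u)) := by
  intro u v
  rw [Option.some.injEq]
  exact ⟨fun h => h ▸ hf u, (hf u).unique hT hfin⟩

theorem Run.sweep_fwd {q} (hq : T.ρ q = true) (hloop : ∀ a, (q, [], q) ∈ T.δ (.sym a))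
    (v : List A) (l r : List (Tape A)) :
    T.Run (l, q, v.map .sym ++ r) [] (l ++ v.map .sym, q, r) := by
  induction v generalizing l with
  | nil => simpa using Run.refl (l, q, r)
  | cons a v ih =>
    have h := ((Step.fwd_fwd l _ (hloop a) hq hq).run).trans (ih (l ++ [.sym a]))
    simpa using h

theorem Run.sweep_bwd {T : TwoWayTransducer Q A A} {q} (hq : T.ρ q = false)
    (hloop : ∀ a, (q, [a], q) ∈ T.δ (.sym a))
    (v : List A) (l r : List (Tape A)) :
    T.Run (l ++ v.map .sym, q, r) v.reverse (l, q, v.map .sym ++ r) := by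
  induction v generalizing l with
  | nil => simpa using Run.refl (l, q, r)
  | cons a v ih =>
    have h := (ih (l ++ [.sym a])).trans (Step.bwd_bwd l _ (hloop a) hq hq).run
    simpa using h

end TwoWayTransducer

theorem isPlanar_idRel {Q : Type} (ρ : Q → Bool) (lt : Q → Q → Prop) [Std.Asymm lt] :
    IsPlanar ρ lt (idRel Q) := by
  have edge : ∀ x y, ProfileEdge ρ (idRel Q) x y ∨ ProfileEdge ρ (idRel Q) y x →
      x.1 = y.1 ∧ x.2 ≠ y.2 := by
    rintro _ _ (⟨⟨p, _⟩, hp, rfl, rfl⟩ | ⟨⟨p, _⟩, hp, rfl, rfl⟩) <;> simp_all [idRel]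
  rintro ⟨⟨p, i⟩, ⟨p', i'⟩, ⟨q, j⟩, ⟨q', j'⟩, hur, hrv, hvs, huv, hrs⟩
  obtain ⟨rfl, hij⟩ := edge _ _ huv
  obtain ⟨rfl, hij'⟩ := edge _ _ hrs
  have := Std.Asymm.asymm (r := lt)
  cases i <;> cases j <;> cases i' <;> cases j' <;> simp_all [ExtLt]

section Reverse

open TwoWayTransducer

variable {A : Type}

def reverseTransducer (A : Type) : TwoWayTransducer (Fin 3) A A where
  ρ q := q ≠ 1
  init := 0
  init_fwd := by decide
  final := {2}
  δ
    | .lend => {(0, [], 0), (1, [], 2)}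
    | .rend => {(0, [], 1), (2, [], 2)}
    | .sym a => {(0, [], 0), (1, [a], 1), (2, [], 2)}

theorem reverseTransducer_functionalTransitions :
    (reverseTransducer A).FunctionalTransitions := by
  intro a q w₁ r₁ w₂ r₂ h₁ h₂
  cases a <;> simp only [reverseTransducer, Set.mem_insert_iff, Set.mem_singleton_iff,
    Prod.mk.injEq] at h₁ h₂ <;> aesop

theorem reverseTransducer_reversible : (reverseTransducer A).Reversible := by
  refine fun a => ⟨reverseTransducer_functionalTransitions.deterministic a, ?_⟩
  rintro q q' r ⟨w, h⟩ ⟨w', h'⟩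
  cases a <;> simp only [reverseTransducer, Set.mem_insert_iff, Set.mem_singleton_iff,
    Prod.mk.injEq] at h h' <;> aesop

theorem reverseTransducer_rel_sym (a : A) :
    (reverseTransducer A).rel (.sym a) = idRel (Fin 3) := by
  ext ⟨q, r⟩
  simp only [TwoWayTransducer.rel, reverseTransducer, idRel, Set.mem_ofPred_eq,
    Set.mem_insert_iff, Set.mem_singleton_iff, Prod.mk.injEq]
  constructor
  · aesop
  · rintro rfl
    fin_cases q <;> simp

theorem reverseTransducer_planar : (reverseTransducer A).Planar :=
  ⟨(· < ·), inferInstance, fun a => reverseTransducer_rel_sym a ▸ isPlanar_idRel _ _⟩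

theorem reverseTransducer_realizes (u : List A) :
    (reverseTransducer A).Realizes u u.reverse := by
  have enter : (reverseTransducer A).Step ([], 0, tapeOf u) []
      ([.lend], 0, u.map .sym ++ [.rend]) :=
    Step.fwd_fwd [] _ (by simp [reverseTransducer]) rfl rfl
  have sweep₀ := Run.sweep_fwd (T := reverseTransducer A) (q := 0) rfl
    (fun _ => by simp [reverseTransducer]) u [.lend] [.rend]
  have turn₁ : (reverseTransducer A).Step ([.lend] ++ u.map .sym, 0, [.rend]) []
      ([.lend] ++ u.map .sym, 1, [.rend]) :=
    Step.fwd_bwd _ [] (by simp [reverseTransducer]) rfl rfl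
  have sweep₁ := Run.sweep_bwd (T := reverseTransducer A) (q := 1) rfl
    (fun _ => by simp [reverseTransducer]) u [.lend] [.rend]
  have turn₂ : (reverseTransducer A).Step ([] ++ [.lend], 1, u.map .sym ++ [.rend]) []
      ([] ++ [.lend], 2, u.map .sym ++ [.rend]) :=
    Step.bwd_fwd [] _ (by simp [reverseTransducer]) rfl rfl
  have sweep₂ := Run.sweep_fwd (T := reverseTransducer A) (q := 2) rfl
    (fun _ => by simp [reverseTransducer]) u [.lend] [.rend]
  have exit : (reverseTransducer A).Step ([.lend] ++ u.map .sym, 2, [.rend]) []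
      ([.lend] ++ u.map .sym ++ [.rend], 2, []) :=
    Step.fwd_fwd _ [] (by simp [reverseTransducer]) rfl rfl
  refine ⟨2, rfl, show Run _ ([], 0, tapeOf u) _ _ from ?_⟩
  simpa [tapeOf] using enter.run.trans <| sweep₀.trans <| turn₁.run.trans <| sweep₁.trans <|
    turn₂.run.trans <| sweep₂.trans exit.run

end Reverse

theorem reverse_planar_reversible_general {A : Type} :
    ∃ T : TwoWayTransducer (Fin 3) A A,
      T.Planar ∧ T.Reversible ∧ T.Computes (fun w => some w.reverse) :=
  ⟨reverseTransducer A, reverseTransducer_planar, reverseTransducer_reversible,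
    TwoWayTransducer.computes_of_realizes reverseTransducer_functionalTransitions
      (by simp [reverseTransducer]) reverseTransducer_realizes⟩

/-- for every finite alphabet, the mirror-image function is
computed by a planar reversible two-way finite transducer with 3 states. -/
theorem reverse_planar_reversible {A : Type} [Fintype A] :
    ∃ T : TwoWayTransducer (Fin 3) A A,
      T.Planar ∧ T.Reversible ∧ T.Computes (fun w => some w.reverse) :=
  reverse_planar_reversible_general

end Planar2DFT
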